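/- Let F ∈ K[x_0,...,x_n]_d be a homogeneous polynomial of degree d and suppose each first partial derivative F_{x_t} admits a decomposition F_{x_t} = Σ_{i=1}^h α_i^t L_i^{d-1}, where L_i = A_i^0 x_0 + ... + A_i^n x_n are linear forms such that L_1^{d-2},...,L_h^{d-2} are linearly independent in K[x_0,...,x_n]_{d-2}. Then the coefficients satisfy the relations α_i^t A_i^s = α_i^s A_i^t for all t,s = 0,...,n and i = 1,...,h. -/

import Mathlib

open MvPolynomial

/-- The iterated partial derivative operator associated to a multi-index `σ`. -/
noncomputable def pd (K : Type) [CommSemiring K] {m : ℕ} (σ : Fin m → ℕ) :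
    Module.End K (MvPolynomial (Fin m) K) :=
  (List.ofFn (fun j : Fin m =>
    ((MvPolynomial.pderiv (R := K) j).toLinearMap ^ (σ j) :
      Module.End K (MvPolynomial (Fin m) K)))).prod

/-- The linear form with coefficient vector `a`. -/
noncomputable def lform {K : Type} [CommSemiring K] {m : ℕ} (a : Fin m → K) :
    MvPolynomial (Fin m) K :=
  ∑ j, MvPolynomial.C (a j) * MvPolynomial.X j

/-!
Comparing the two expansions of `F_{x_t x_s} = F_{x_s x_t}` obtained by differentiating the
decompositions of `F_{x_t}` and `F_{x_s}` gives
`∑ᵢ (d-1) αᵢᵗ Aᵢˢ Lᵢ^{d-2} = ∑ᵢ (d-1) αᵢˢ Aᵢᵗ Lᵢ^{d-2}`; the powers `Lᵢ^{d-2}` being linearly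
independent, the coefficients agree, and `d - 1` is invertible in characteristic zero.
-/

/-- The commutator of two partial derivatives is a derivation killing every variable. -/
theorem MvPolynomial.pderiv_pderiv_comm {R σ : Type*} [CommRing R] (s t : σ)
    (p : MvPolynomial σ R) : pderiv s (pderiv t p) = pderiv t (pderiv s p) := by
  classical
  have hbracket :
      ⁅(pderiv s : Derivation R (MvPolynomial σ R) (MvPolynomial σ R)), pderiv t⁆ = 0 :=
    derivation_ext fun j => by
      rw [Derivation.commutator_apply, pderiv_X, pderiv_X]
      simp [Pi.single_apply, apply_ite]
  simpa [Derivation.commutator_apply, sub_eq_zero] using congr($hbracket p)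

theorem pderiv_lform {K : Type} [CommSemiring K] {m : ℕ} (a : Fin m → K) (s : Fin m) :
    pderiv s (lform a) = C (a s) := by
  simp [lform, pderiv_X, Pi.single_apply]

theorem pderiv_sum_C_mul_lform_pow {K : Type} [CommSemiring K] {m h : ℕ} (c : Fin h → K)
    (A : Fin h → Fin m → K) (k : ℕ) (s : Fin m) :
    pderiv s (∑ i, C (c i) * lform (A i) ^ (k + 1)) =
      ∑ i, ((k + 1 : K) * c i * A i s) • lform (A i) ^ k := by
  simp only [map_sum, pderiv_C_mul, pderiv_pow, pderiv_lform, add_tsub_cancel_right,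
    smul_eq_C_mul, map_mul, map_add, map_natCast, map_one]
  refine Finset.sum_congr rfl fun i _ => ?_
  push_cast
  ring

theorem stmt2_general {K : Type} [Field K] [CharZero K] (n d h : ℕ) (hd : 2 ≤ d)
    (F : MvPolynomial (Fin (n + 1)) K)
    (α A : Fin h → Fin (n + 1) → K)
    (hdec : ∀ t : Fin (n + 1),
      MvPolynomial.pderiv t F = ∑ i : Fin h, MvPolynomial.C (α i t) * (lform (A i)) ^ (d - 1))
    (hind : LinearIndependent K (fun i : Fin h => (lform (A i)) ^ (d - 2))) :
    ∀ (t s : Fin (n + 1)) (i : Fin h), α i t * A i s = α i s * A i t := by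
  intro t s i
  obtain ⟨k, rfl⟩ := Nat.exists_eq_add_of_le' hd
  simp only [Nat.add_sub_cancel, show k + 2 - 1 = k + 1 by omega] at hdec hind
  have hmixed := pderiv_pderiv_comm s t F
  rw [hdec t, hdec s, pderiv_sum_C_mul_lform_pow, pderiv_sum_C_mul_lform_pow] at hmixed
  have hcoeff := Fintype.linearIndependent_iffₛ.mp hind _ _ hmixed i
  simpa [mul_assoc, Nat.cast_add_one_ne_zero k] using hcoeff

/-- If every first partial derivative of a homogeneous `F` of degree `d` decomposes as
`F_{x_t} = ∑_i α_i^t L_i^{d-1}`, with `L_i = ∑_j A_i^j x_j` such that the powers `L_i^{d-2}`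
are linearly independent, then `α_i^t A_i^s = α_i^s A_i^t` for all `t, s, i`. -/
theorem stmt2 {K : Type} [Field K] [CharZero K] (n d h : ℕ) (hd : 2 ≤ d)
    (F : MvPolynomial (Fin (n + 1)) K) (hF : F.IsHomogeneous d)
    (α A : Fin h → Fin (n + 1) → K)
    (hdec : ∀ t : Fin (n + 1),
      MvPolynomial.pderiv t F = ∑ i : Fin h, MvPolynomial.C (α i t) * (lform (A i)) ^ (d - 1))
    (hind : LinearIndependent K (fun i : Fin h => (lform (A i)) ^ (d - 2))) :
    ∀ (t s : Fin (n + 1)) (i : Fin h), α i t * A i s = α i s * A i t :=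
  stmt2_general n d h hd F α A hdec hind
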